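/- Let G be a connected loopless multigraph on a finite vertex set V, with spanning simple graph G̃ = (V, Ẽ). Then the coefficient of t^{|V|−2} in the Laurent polynomial T_G(−t,−1/t) equals (−1)^{|V|−1} · (|V| − 1 − |Ẽ|); in particular its absolute value is |Ẽ| + 1 − |V|. -/

import Mathlib

open LaurentPolynomial Finset

/-- Number of connected components of the simple graph on `V` with edge set `s`
(isolated vertices count as components). -/
noncomputable def numComponents (V : Type*) (s : Set (Sym2 V)) : ℕ :=
  Nat.card (SimpleGraph.fromEdgeSet s).ConnectedComponent

/-- The evaluation `T_G(-t, -1/t)` of the Tutte polynomial of the multigraph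
given by `ε : E → Sym2 V`, as a Laurent polynomial in `ℤ[t,t⁻¹]`. -/
noncomputable def tutteEval {V E : Type*} [Fintype V] [Fintype E]
    (ε : E → Sym2 V) : LaurentPolynomial ℤ :=
  ∑ F : Finset E,
    (-T 1 - 1) ^ (numComponents V (ε '' ↑F) - numComponents V (Set.range ε)) *
      (-T (-1) - 1) ^ (F.card + numComponents V (ε '' ↑F) - Fintype.card V)

/-- `P(m) = 1 - t⁻¹ + t⁻² - ⋯ ± t^{-(m-1)}`. -/
noncomputable def Ppoly (m : ℕ) : LaurentPolynomial ℤ :=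
  ∑ i ∈ Finset.range m, (-T (-1)) ^ i

section
variable {V E : Type*} [Fintype V] [DecidableEq V] [Fintype E]

/-- The edge set of the spanning simple graph of the multigraph `ε : E → Sym2 V`. -/
noncomputable def spanningEdges (ε : E → Sym2 V) : Finset (Sym2 V) :=
  Finset.image ε Finset.univ

/-- The multiplicity of an edge `e` of the spanning simple graph. -/
noncomputable def edgeMult (ε : E → Sym2 V) (e : Sym2 V) : ℕ :=
  Nat.card {f : E // ε f = e}

/-- `n(j)`: the number of edges of the spanning simple graph of multiplicity `≥ j`. -/
noncomputable def nMult (ε : E → Sym2 V) (j : ℕ) : ℕ :=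
  Nat.card {e : Sym2 V // e ∈ spanningEdges ε ∧ j ≤ edgeMult ε e}

/-- The number of triangles in the spanning simple graph. -/
noncomputable def numTriangles (ε : E → Sym2 V) : ℕ :=
  Nat.card {s : Finset V // s.card = 3 ∧
    ∀ u ∈ s, ∀ v ∈ s, u ≠ v → s(u, v) ∈ spanningEdges ε}
end

/-!
Each summand of `T_G(-t, -1/t)` is `±t^(-b) (1 + t)^(a + b)` with `a = k(F) - 1`, so it has degree
at most `a` and reaches `t^(|V| - 2)` only when `k(F) ≥ |V| - 1`, that is when `F` is empty or
consists of parallel copies of a single edge `e` of `G̃`. The empty set contributes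
`(-1)^(|V| - 1) (|V| - 1)`, and the nonempty subsets of the parallel class of `e` contribute
`(-1)^(|V| - 1) ∑_{F ≠ ∅} (-1)^|F| = -(-1)^(|V| - 1)`. Connectivity gives `|Ẽ| ≥ |V| - 1`, which
fixes the sign for the absolute value.
-/

namespace LaurentPolynomial
open Polynomial

section Semiring

variable {R : Type*} [Semiring R]

theorem coeff_toLaurent_intCast (p : R[X]) (m : ℤ) :
    (toLaurent p).coeff m = if 0 ≤ m then p.coeff m.toNat else 0 := by
  rw [coeff_toLaurent]
  split_ifs with hm
  · lift m to ℕ using hm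
    exact Finsupp.mapDomain_apply Nat.castEmbedding.injective _ m
  · refine Finsupp.mapDomain_of_notMem_range _ _ ?_
    rintro ⟨k, rfl⟩
    exact hm (Int.natCast_nonneg k)

theorem coeff_T_mul (f : R[T;T⁻¹]) (n m : ℤ) : (T n * f).coeff m = f.coeff (m - n) := by
  rw [T, AddMonoidAlgebra.coeff_single_mul_apply, one_mul, neg_add_eq_sub]

end Semiring

theorem neg_T_sub_one_pow_mul (a b : ℕ) :
    ((-T 1 - 1 : LaurentPolynomial ℤ) ^ a * (-T (-1) - 1) ^ b) =
      (-1 : ℤ) ^ (a + b) • (T (-b) * toLaurent ((1 + X) ^ (a + b))) := by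
  have hw : (-T (-1) - 1 : LaurentPolynomial ℤ) = -(T (-1) * (1 + T 1)) := by
    rw [mul_add, mul_one, ← T_add, neg_add_cancel, T_zero]
    ring
  rw [hw, map_pow, map_add, map_one, toLaurent_X, neg_pow, mul_pow, T_pow,
    show (-T 1 - 1 : LaurentPolynomial ℤ) = -(1 + T 1) by ring, neg_pow, zsmul_eq_mul]
  simp only [Int.reduceNeg, mul_neg, mul_one]
  push_cast
  ring

theorem coeff_neg_T_sub_one_pow_mul (a b : ℕ) (m : ℤ) :
    ((-T 1 - 1 : LaurentPolynomial ℤ) ^ a * (-T (-1) - 1) ^ b).coeff m =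
      (-1) ^ (a + b) * if 0 ≤ m + b then ((a + b).choose (m + b).toNat : ℤ) else 0 := by
  rw [neg_T_sub_one_pow_mul, AddMonoidAlgebra.coeff_smul, Finsupp.smul_apply, coeff_T_mul,
    coeff_toLaurent_intCast, sub_neg_eq_add, smul_eq_mul]
  simp only [coeff_one_add_X_pow]

theorem coeff_neg_T_sub_one_pow_mul_of_lt {a : ℕ} (b : ℕ) {m : ℤ} (h : (a : ℤ) < m) :
    ((-T 1 - 1 : LaurentPolynomial ℤ) ^ a * (-T (-1) - 1) ^ b).coeff m = 0 := by
  rw [coeff_neg_T_sub_one_pow_mul, if_pos (by omega), Nat.choose_eq_zero_of_lt (by omega)]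
  simp

theorem coeff_neg_T_sub_one_pow_mul_self (a b : ℕ) :
    ((-T 1 - 1 : LaurentPolynomial ℤ) ^ a * (-T (-1) - 1) ^ b).coeff a = (-1) ^ (a + b) := by
  rw [coeff_neg_T_sub_one_pow_mul, if_pos (by omega), show ((a : ℤ) + b).toNat = a + b by omega,
    Nat.choose_self, Nat.cast_one, mul_one]

theorem coeff_neg_T_sub_one_pow_sub_one (a : ℕ) :
    ((-T 1 - 1 : LaurentPolynomial ℤ) ^ a).coeff (a - 1) = (-1) ^ a * a := by
  have h := coeff_neg_T_sub_one_pow_mul a 0 (a - 1)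
  rcases a with _ | k
  · simpa using h
  · simpa [Nat.choose_succ_self_right] using h

end LaurentPolynomial

namespace SimpleGraph

variable {V : Type*} {G : SimpleGraph V}

theorem Reachable.apply_eq_of_forall_adj {β : Sort*} {f : V → β}
    (hf : ∀ x y, G.Adj x y → f x = f y) {x y : V} (h : G.Reachable x y) : f x = f y := by
  obtain ⟨p⟩ := h
  induction p with
  | nil => rfl
  | cons hadj _ ih => exact (hf _ _ hadj).trans ih

theorem card_connectedComponent_le_card_sub [Fintype V] (S : Finset V)
    (hS : ∀ v ∈ S, ∃ w ∉ S, G.Adj v w) :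
    Nat.card G.ConnectedComponent ≤ Fintype.card V - S.card := by
  classical
  have hsurj : Function.Surjective fun w : {w // w ∉ S} => G.connectedComponentMk w := by
    intro c
    induction c using ConnectedComponent.ind with | h x => ?_
    by_cases hx : x ∈ S
    · obtain ⟨w, hw, hadj⟩ := hS x hx
      exact ⟨⟨w, hw⟩, (ConnectedComponent.connectedComponentMk_eq_of_adj hadj).symm⟩
    · exact ⟨⟨x, hx⟩, rfl⟩
  calc Nat.card G.ConnectedComponent ≤ Nat.card {w // w ∉ S} :=
        Nat.card_le_card_of_surjective _ hsurj
    _ = Fintype.card V - S.card := by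
        rw [Nat.card_eq_fintype_card, Fintype.card_subtype_compl, Fintype.card_coe]

theorem card_connectedComponent_le_card_sup_edge_add_one [Finite V] (u v : V) :
    Nat.card G.ConnectedComponent ≤ Nat.card (G ⊔ edge u v).ConnectedComponent + 1 := by
  classical
  -- `f` merges the component of `v` into that of `u`, so it is constant along the edges of
  -- `G ⊔ edge u v`; hence the components of `G` other than that of `v` stay apart.
  set f : V → G.ConnectedComponent := fun x =>
    if G.connectedComponentMk x = G.connectedComponentMk v then G.connectedComponentMk u
    else G.connectedComponentMk x with hf
  have hf_adj : ∀ x y, (G ⊔ edge u v).Adj x y → f x = f y := by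
    intro x y hxy
    rcases hxy with hxy | hxy
    · simp only [hf, ConnectedComponent.connectedComponentMk_eq_of_adj hxy]
    · rcases (edge_adj _ _ _ _).1 hxy with ⟨⟨rfl, rfl⟩ | ⟨rfl, rfl⟩, -⟩ <;> simp [hf]
  have hinj : Function.Injective
      fun c : {c : G.ConnectedComponent // c ≠ G.connectedComponentMk v} =>
        c.1.map (Hom.ofLE le_sup_left : G →g G ⊔ edge u v) := by
    rintro ⟨c₁, hc₁⟩ ⟨c₂, hc₂⟩ h
    induction c₁ using ConnectedComponent.ind with | h x => ?_
    induction c₂ using ConnectedComponent.ind with | h y => ?_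
    have hxy := (ConnectedComponent.eq.1 h).apply_eq_of_forall_adj hf_adj
    simp only [hf, Hom.ofLE_apply, if_neg hc₁, if_neg hc₂] at hxy
    exact Subtype.ext hxy
  have := Fintype.ofFinite G.ConnectedComponent
  have hcard := Nat.card_le_card_of_injective _ hinj
  rw [Nat.card_eq_fintype_card (α := {c // _}), Fintype.card_subtype_compl,
    Fintype.card_subtype_eq, ← Nat.card_eq_fintype_card] at hcard
  omega

end SimpleGraph

section numComponents

open SimpleGraph

variable {V : Type*} [Fintype V]

theorem nonempty_of_numComponents_eq_one {s : Set (Sym2 V)}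
    (h : numComponents V s = 1) : Nonempty V := by
  by_contra hV
  rw [not_nonempty_iff] at hV
  simp [numComponents] at h

theorem numComponents_pos [Nonempty V] (s : Set (Sym2 V)) :
    0 < numComponents V s :=
  Nat.card_pos

theorem card_le_numComponents_add_card [DecidableEq V] (s : Finset (Sym2 V)) :
    Fintype.card V ≤ numComponents V s + s.card := by
  induction s using Finset.induction_on with
  | empty =>
    have hinj : Function.Injective (fromEdgeSet (∅ : Set (Sym2 V))).connectedComponentMk :=
      fun x y h => (ConnectedComponent.eq.1 h).apply_eq_of_forall_adj (f := id) (by simp)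
    simpa [numComponents, Nat.card_eq_fintype_card] using Nat.card_le_card_of_injective _ hinj
  | insert e t he ih =>
    induction e using Sym2.ind with | _ u v => ?_
    have hG : fromEdgeSet ↑(insert s(u, v) t) = fromEdgeSet ↑t ⊔ edge u v := by
      rw [coe_insert, Set.insert_eq, fromEdgeSet_union, sup_comm]
      rfl
    have := card_connectedComponent_le_card_sup_edge_add_one (G := fromEdgeSet ↑t) u v
    rw [numComponents, card_insert_of_notMem he, hG]
    rw [numComponents] at ih
    omega

theorem numComponents_le_card_sub {s : Set (Sym2 V)} (S : Finset V)
    (hS : ∀ v ∈ S, ∃ w ∉ S, s(v, w) ∈ s ∧ v ≠ w) :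
    numComponents V s ≤ Fintype.card V - S.card :=
  card_connectedComponent_le_card_sub S fun v hv => by simpa using hS v hv

theorem numComponents_empty [DecidableEq V] : numComponents V ∅ = Fintype.card V :=
  le_antisymm (by simpa using numComponents_le_card_sub (V := V) (s := ∅) ∅ (by simp))
    (by simpa using card_le_numComponents_add_card (∅ : Finset (Sym2 V)))

theorem numComponents_singleton [DecidableEq V] {e : Sym2 V} (he : ¬e.IsDiag) :
    numComponents V {e} = Fintype.card V - 1 := by
  induction e using Sym2.ind with | _ u v => ?_
  have huv : u ≠ v := by simpa using he
  refine le_antisymm ?_ (by simpa using card_le_numComponents_add_card {s(u, v)})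
  simpa using numComponents_le_card_sub (s := {s(u, v)}) {v} (by simp [huv, huv.symm])

theorem numComponents_le_card_sub_two {s : Set (Sym2 V)} {e₁ e₂ : Sym2 V} (h₁ : e₁ ∈ s)
    (h₂ : e₂ ∈ s) (hne : e₁ ≠ e₂) (hd₁ : ¬e₁.IsDiag) (hd₂ : ¬e₂.IsDiag) :
    numComponents V s ≤ Fintype.card V - 2 := by
  classical
  -- Both `a ∈ e₁ \ e₂` and an end `c` of `e₂` other than the far end of `a` in `e₁` have a
  -- neighbour outside `{a, c}`.
  obtain ⟨a, ha₁, ha₂⟩ : ∃ a ∈ e₁, a ∉ e₂ := by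
    by_contra! h
    induction e₁ using Sym2.ind with | _ x y => ?_
    exact hne ((Sym2.mem_and_mem_iff (by simpa using hd₁)).1
      ⟨h x (Sym2.mem_mk_left x y), h y (Sym2.mem_mk_right x y)⟩).symm
  obtain ⟨c, hc₂, hcb⟩ : ∃ c ∈ e₂, c ≠ Sym2.Mem.other ha₁ := by
    induction e₂ using Sym2.ind with | _ x y => ?_
    by_cases hx : x = Sym2.Mem.other ha₁
    · exact ⟨y, Sym2.mem_mk_right x y, fun hy => hd₂ (by simp [hx, hy])⟩
    · exact ⟨x, Sym2.mem_mk_left x y, hx⟩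
  have hac : a ≠ c := fun h => ha₂ (h ▸ hc₂)
  refine (card_pair hac ▸ numComponents_le_card_sub {a, c} ?_)
  simp only [mem_insert, mem_singleton, forall_eq_or_imp, forall_eq]
  refine ⟨⟨Sym2.Mem.other ha₁, ?_, ?_, ?_⟩, ⟨Sym2.Mem.other hc₂, ?_, ?_, ?_⟩⟩
  · exact not_or.2 ⟨Sym2.other_ne hd₁ ha₁, hcb.symm⟩
  · exact (Sym2.other_spec ha₁).symm ▸ h₁
  · exact (Sym2.other_ne hd₁ ha₁).symm
  · exact not_or.2 ⟨fun h => ha₂ (h ▸ Sym2.other_mem hc₂), Sym2.other_ne hd₂ hc₂⟩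
  · exact (Sym2.other_spec hc₂).symm ▸ h₂
  · exact (Sym2.other_ne hd₂ hc₂).symm

end numComponents

theorem Finset.sum_finset_eq_add_sum_fiber_powerset {E β M : Type*} [Fintype E] [DecidableEq E]
    [DecidableEq β] [AddCommMonoid M] (ε : E → β) (g : Finset E → M)
    (hg : ∀ F : Finset E, 1 < (F.image ε).card → g F = 0) :
    ∑ F, g F = g ∅ + ∑ b ∈ univ.image ε, ∑ F ∈ (univ.filter (ε · = b)).powerset.erase ∅, g F := by
  set A := fun b => (univ.filter (ε · = b)).powerset.erase ∅
  have hdisj : (univ.image ε : Set β).PairwiseDisjoint A := by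
    intro b₁ _ b₂ _ hb
    refine disjoint_left.2 fun F hF₁ hF₂ => ?_
    simp only [A, mem_erase, mem_powerset, ← nonempty_iff_ne_empty] at hF₁ hF₂
    obtain ⟨f, hf⟩ := hF₁.1
    exact hb ((mem_filter.1 (hF₁.2 hf)).2.symm.trans (mem_filter.1 (hF₂.2 hf)).2)
  have hempty : ∅ ∉ (univ.image ε).biUnion A := by simp [A]
  rw [← sum_biUnion hdisj, ← sum_insert hempty]
  refine (sum_subset (subset_univ _) fun F _ hF => hg F ?_).symm
  by_contra! hle
  refine hF ?_
  obtain rfl | ⟨f, hf⟩ := F.eq_empty_or_nonempty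
  · exact mem_insert_self _ _
  refine mem_insert_of_mem (mem_biUnion.2 ⟨ε f, mem_image_of_mem _ (mem_univ f), ?_⟩)
  refine mem_erase.2 ⟨ne_empty_of_mem hf, mem_powerset.2 fun f' hf' => ?_⟩
  exact mem_filter.2 ⟨mem_univ f',
    card_le_one.1 hle _ (mem_image_of_mem _ hf') _ (mem_image_of_mem _ hf)⟩

theorem Finset.sum_powerset_erase_empty_neg_one_pow_card {α : Type*} [DecidableEq α]
    {s : Finset α} (hs : s.Nonempty) : ∑ t ∈ s.powerset.erase ∅, (-1 : ℤ) ^ t.card = -1 := by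
  rw [Finset.sum_erase_eq_sub (Finset.empty_mem_powerset s),
    Finset.sum_powerset_neg_one_pow_card_of_nonempty hs]
  simp

noncomputable def tutteTerm {V E : Type*} [Fintype V] (ε : E → Sym2 V) (F : Finset E) :
    LaurentPolynomial ℤ :=
  (-T 1 - 1) ^ (numComponents V (ε '' ↑F) - numComponents V (Set.range ε)) *
    (-T (-1) - 1) ^ (F.card + numComponents V (ε '' ↑F) - Fintype.card V)

theorem coe_spanningEdges {V E : Type*} [DecidableEq V] [Fintype E] (ε : E → Sym2 V) :
    (spanningEdges ε : Set (Sym2 V)) = Set.range ε := by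
  simp [spanningEdges]

section tutteTerm

variable {V E : Type*} [Fintype V] {ε : E → Sym2 V}

theorem coeff_tutteEval [Fintype E] (m : ℤ) :
    (tutteEval ε).coeff m = ∑ F, (tutteTerm ε F).coeff m := by
  simp only [tutteEval, tutteTerm, AddMonoidAlgebra.coeff_sum, Finsupp.finsetSum_apply]

variable [DecidableEq V] (hconn : numComponents V (Set.range ε) = 1)
include hconn

theorem coeff_tutteTerm_empty :
    (tutteTerm ε ∅).coeff (Fintype.card V - 2) =
      (-1) ^ (Fintype.card V - 1) * (Fintype.card V - 1 : ℤ) := by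
  have := nonempty_of_numComponents_eq_one hconn
  have hn := Fintype.card_pos (α := V)
  have := coeff_neg_T_sub_one_pow_sub_one (Fintype.card V - 1)
  simp only [tutteTerm, coe_empty, Set.image_empty, numComponents_empty, hconn, card_empty,
    zero_add, Nat.sub_self, pow_zero, mul_one]
  push_cast [hn] at this
  convert this using 2
  ring

theorem coeff_tutteTerm_eq_zero (hloopless : ∀ f, ¬(ε f).IsDiag) {F : Finset E}
    (hF : 1 < (F.image ε).card) : (tutteTerm ε F).coeff (Fintype.card V - 2) = 0 := by
  have := nonempty_of_numComponents_eq_one hconn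
  obtain ⟨e₁, he₁, e₂, he₂, hne⟩ := one_lt_card.1 hF
  obtain ⟨f₁, -, rfl⟩ := mem_image.1 he₁
  obtain ⟨f₂, -, rfl⟩ := mem_image.1 he₂
  have hk := numComponents_le_card_sub_two (s := ε '' ↑F) (by simpa using he₁)
    (by simpa using he₂) hne (hloopless f₁) (hloopless f₂)
  have hpos := numComponents_pos (ε '' ↑F)
  rw [tutteTerm, hconn]
  exact coeff_neg_T_sub_one_pow_mul_of_lt _ (by omega)

theorem coeff_tutteTerm_of_image_eq_singleton {F : Finset E} {e : Sym2 V} (he : ¬e.IsDiag)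
    (hF : ε '' ↑F = {e}) (hFne : F.Nonempty) :
    (tutteTerm ε F).coeff (Fintype.card V - 2) = (-1) ^ (Fintype.card V - 1) * (-1) ^ F.card := by
  have := nonempty_of_numComponents_eq_one hconn
  have hpos := numComponents_pos (V := V) {e}
  rw [numComponents_singleton he] at hpos
  have hFpos := hFne.card_pos
  have := coeff_neg_T_sub_one_pow_mul_self (Fintype.card V - 2) (F.card - 1)
  rw [tutteTerm, hF, hconn, numComponents_singleton he,
    show F.card + (Fintype.card V - 1) - Fintype.card V = F.card - 1 by omega,
    ← pow_add,
    show Fintype.card V - 1 + F.card = (Fintype.card V - 2 + (F.card - 1)) + 2 by omega,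
    pow_add, neg_one_sq, mul_one, ← this]
  congr 1
  omega

theorem sum_coeff_tutteTerm_fiber [Fintype E] [DecidableEq E] (hloopless : ∀ f, ¬(ε f).IsDiag)
    {e : Sym2 V} (he : e ∈ spanningEdges ε) :
    ∑ F ∈ (univ.filter (ε · = e)).powerset.erase ∅, (tutteTerm ε F).coeff (Fintype.card V - 2) =
      -(-1) ^ (Fintype.card V - 1) := by
  obtain ⟨f, -, rfl⟩ := mem_image.1 he
  have hfiber : (univ.filter (ε · = ε f)).Nonempty := ⟨f, by simp⟩
  calc _ = ∑ F ∈ (univ.filter (ε · = ε f)).powerset.erase ∅,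
          (-1) ^ (Fintype.card V - 1) * (-1 : ℤ) ^ F.card := by
        refine sum_congr rfl fun F hF => ?_
        rw [mem_erase, mem_powerset, ← nonempty_iff_ne_empty] at hF
        refine coeff_tutteTerm_of_image_eq_singleton hconn (hloopless f) ?_ hF.1
        obtain ⟨g, hg⟩ := hF.1
        refine Set.eq_singleton_iff_unique_mem.2 ⟨⟨g, hg, (mem_filter.1 (hF.2 hg)).2⟩, ?_⟩
        rintro _ ⟨g', hg', rfl⟩
        exact (mem_filter.1 (hF.2 hg')).2
    _ = -(-1) ^ (Fintype.card V - 1) := by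
        rw [← mul_sum, sum_powerset_erase_empty_neg_one_pow_card hfiber, mul_neg_one]

end tutteTerm

/-- For a connected loopless multigraph with spanning simple graph
edge set `Ẽ`, the coefficient of `t^(|V|-2)` in `T_G(-t,-1/t)` equals
`(-1)^(|V|-1) * (|V| - 1 - |Ẽ|)`; in particular its absolute value is `|Ẽ| + 1 - |V|`. -/
theorem tutteEval_second_coeff {V E : Type*} [Fintype V] [DecidableEq V] [Fintype E]
    (ε : E → Sym2 V)
    (hloopless : ∀ f : E, ¬ (ε f).IsDiag)
    (hconn : numComponents V (Set.range ε) = 1) :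
    (tutteEval ε).coeff ((Fintype.card V : ℤ) - 2) =
        (-1) ^ (Fintype.card V - 1) *
          ((Fintype.card V : ℤ) - 1 - (spanningEdges ε).card) ∧
      |(tutteEval ε).coeff ((Fintype.card V : ℤ) - 2)| =
        ((spanningEdges ε).card : ℤ) + 1 - Fintype.card V := by
  classical
  have hcard : Fintype.card V ≤ (spanningEdges ε).card + 1 := by
    simpa [coe_spanningEdges, hconn, add_comm] using
      card_le_numComponents_add_card (spanningEdges ε)
  have hcoeff : (tutteEval ε).coeff ((Fintype.card V : ℤ) - 2) =
      (-1) ^ (Fintype.card V - 1) * ((Fintype.card V : ℤ) - 1 - (spanningEdges ε).card) := by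
    rw [coeff_tutteEval, sum_finset_eq_add_sum_fiber_powerset ε _
        fun F hF => coeff_tutteTerm_eq_zero hconn hloopless hF,
      coeff_tutteTerm_empty hconn, ← spanningEdges,
      sum_congr rfl fun e he => sum_coeff_tutteTerm_fiber hconn hloopless he, sum_const,
      nsmul_eq_mul]
    ring
  refine ⟨hcoeff, ?_⟩
  rw [hcoeff, abs_mul, abs_neg_one_pow, one_mul, abs_of_nonpos (by omega)]
  ring
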